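/- Let S₁ and S₂ be sectors in ℂ, let U be an open neighborhood of 0 in ℂ, and let f : U → ℂ be holomorphic with f(0) = 0 and f'(0) ≠ 0, satisfying f(S₂ ∩ U) ⊆ S₁. Let φ : S₁ → ℂ be holomorphic and admit a nonzero formal power series φ̂ ∈ ℂ[[z]] as asymptotic expansion on S₁, and let f̂ ∈ ℂ[[z]] denote the Taylor series of f at 0 (which has zero constant coefficient). Then the formal substitution φ̂ ∘ f̂ is nonzero, and there exists r > 0 such that the composition φ ∘ f, restricted to S₂ ∩ {z : 0 < |z| < r}, admits φ̂ ∘ f̂ as asymptotic expansion. -/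

import Mathlib

/-!
Truncating at order `k`, `φ (f z) = ∑_{j<k} a j * f z ^ j + O(‖f z‖ ^ k)` on `S₂` near `0`, and
`‖f z‖ = O(‖z‖)` since `f 0 = 0`. Asymptotic expansions near `0` are compatible with sums and
products, so `∑_{j<k} a j * f ^ j` has the expansion `∑_{j<k} a j * f̂ ^ j`, whose truncation
at order `k` is that of `φ̂ ∘ f̂` because `f̂` has no constant term. These estimates, obtained on
some neighbourhood of `0` depending on `k`, hold on all of `S₂ ∩ {‖z‖ < r}` because both sides
are bounded there and `‖z‖ ^ k` is bounded below away from `0`.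

If `a m` is the first nonzero coefficient of `φ̂`, the coefficient of `z ^ m` in `φ̂ ∘ f̂` is
`a m * f'(0) ^ m ≠ 0`.
-/

/-- `S` is a sector with vertex at the origin. -/
def IsSector (S : Set ℂ) : Prop :=
  ∃ R α₁ α₂ : ℝ, 0 < R ∧ α₁ < α₂ ∧
    S = {z : ℂ | 0 < ‖z‖ ∧ ‖z‖ < R ∧ α₁ < z.arg ∧ z.arg < α₂}

/-- Formal substitution `f ∘ g` of a power series `g` (intended to have zero
constant coefficient) into a power series `f`. -/
noncomputable def pscomp (f g : PowerSeries ℂ) : PowerSeries ℂ :=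
  PowerSeries.mk fun n =>
    ∑ k ∈ Finset.range (n + 1), (PowerSeries.coeff k f) * (PowerSeries.coeff n (g ^ k))

/-- The Taylor series of `f` at `0`. -/
noncomputable def taylorAt (f : ℂ → ℂ) : PowerSeries ℂ :=
  PowerSeries.mk fun n => iteratedDeriv n f 0 / n.factorial

open PowerSeries Asymptotics Filter Topology
open scoped Polynomial

namespace PowerSeries

variable {R : Type*} [CommSemiring R] {g : R⟦X⟧}

theorem eval_trunc_eq_sum_range (z : R) (k : ℕ) (p : R⟦X⟧) :
    (trunc k p).eval z = ∑ j ∈ Finset.range k, coeff j p * z ^ j :=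
  eval₂_trunc_eq_sum_range z (RingHom.id R) k p

theorem coeff_pow_of_lt (hg : constantCoeff g = 0) {n j : ℕ} (h : n < j) :
    coeff n (g ^ j) = 0 :=
  coeff_of_lt_order n ((Nat.cast_lt.2 h).trans_le (le_order_pow_of_constantCoeff_eq_zero j hg))

theorem coeff_pow_self (hg : constantCoeff g = 0) (j : ℕ) :
    coeff j (g ^ j) = coeff 1 g ^ j := by
  obtain ⟨h, rfl⟩ := X_dvd_iff.2 hg
  rw [mul_pow, coeff_X_pow_mul', if_pos le_rfl, Nat.sub_self, coeff_zero_eq_constantCoeff_apply,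
    map_pow, coeff_succ_X_mul, coeff_zero_eq_constantCoeff_apply]

end PowerSeries

section Substitution

variable {p g : ℂ⟦X⟧}

theorem coeff_pscomp (hg : constantCoeff g = 0) {n N : ℕ} (hn : n < N) :
    coeff n (pscomp p g) = ∑ j ∈ Finset.range N, coeff j p * coeff n (g ^ j) := by
  rw [pscomp, coeff_mk]
  refine Finset.sum_subset (Finset.range_subset_range.2 hn) fun j _ hj => ?_
  rw [coeff_pow_of_lt hg (by simpa using hj), mul_zero]

theorem trunc_pscomp (hg : constantCoeff g = 0) (k : ℕ) :
    trunc k (pscomp p g) = trunc k (∑ j ∈ Finset.range k, C (coeff j p) * g ^ j) := by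
  ext n
  simp only [coeff_trunc]
  split_ifs with hn
  · simp [coeff_pscomp hg hn, map_sum, coeff_C_mul]
  · rfl

theorem pscomp_ne_zero (hp : p ≠ 0) (hg₀ : constantCoeff g = 0)
    (hg₁ : coeff 1 g ≠ 0) : pscomp p g ≠ 0 := by
  set m := p.order.toNat
  have hm : coeff m (pscomp p g) = coeff m p * coeff 1 g ^ m := by
    rw [coeff_pscomp hg₀ m.lt_succ_self, Finset.sum_range_succ, coeff_pow_self hg₀,
      Finset.sum_eq_zero fun j hj => ?_, zero_add]
    rw [coeff_of_lt_order_toNat j (Finset.mem_range.1 hj), zero_mul]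
  intro h
  rw [h, map_zero] at hm
  exact mul_ne_zero (coeff_order hp) (pow_ne_zero m hg₁) hm.symm

end Substitution

section AsymptoticExpansion

variable {𝕜 : Type*} [NormedField 𝕜] {l : Filter 𝕜} {k : ℕ} {u v : 𝕜 → 𝕜} {p q : 𝕜⟦X⟧}

/-- An asymptotic expansion on a sector `S` in the sense of the paper is
`∀ k, HasAsymptoticExpansionUpTo u p (𝓟 S) k`. -/
def HasAsymptoticExpansionUpTo (u : 𝕜 → 𝕜) (p : 𝕜⟦X⟧) (l : Filter 𝕜) (k : ℕ) : Prop :=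
  (fun z => u z - (trunc k p).eval z) =O[l] fun z => z ^ k

theorem hasAsymptoticExpansionUpTo_principal_iff {s : Set 𝕜} :
    HasAsymptoticExpansionUpTo u p (𝓟 s) k ↔ ∃ A : ℝ, 0 < A ∧ ∀ z ∈ s,
      ‖u z - ∑ j ∈ Finset.range k, coeff j p * z ^ j‖ ≤ A * ‖z‖ ^ k := by
  simp only [HasAsymptoticExpansionUpTo, eval_trunc_eq_sum_range]
  constructor
  · intro h
    obtain ⟨A, hA, hAw⟩ := h.exists_pos
    exact ⟨A, hA, fun z hz => by simpa using isBigOWith_principal.1 hAw z hz⟩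
  · rintro ⟨A, -, hA⟩
    exact isBigO_principal.2 ⟨A, fun z hz => by simpa using hA z hz⟩

theorem Polynomial.hasAsymptoticExpansionUpTo_eval (Q : 𝕜[X]) (hl : l ≤ 𝓝 0) (k : ℕ) :
    HasAsymptoticExpansionUpTo (fun z => Q.eval z) Q l k := by
  obtain ⟨R, hR⟩ : Polynomial.X ^ k ∣ Q - trunc k (Q : 𝕜⟦X⟧) :=
    Polynomial.X_pow_dvd_iff.2 fun d hd => by simp [coeff_trunc, hd]
  have hsplit : (fun z => Q.eval z - (trunc k (Q : 𝕜⟦X⟧)).eval z) = fun z => z ^ k * R.eval z := by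
    funext z
    simpa using congrArg (Polynomial.eval z) hR
  rw [HasAsymptoticExpansionUpTo, hsplit]
  simpa using (isBigO_refl (fun z : 𝕜 => z ^ k) l).mul
    (((R.continuous.tendsto 0).isBigO_one 𝕜).mono hl)

theorem isBigO_principal_pow_of_nhdsWithin {E : Type*} [SeminormedAddCommGroup E] {s : Set 𝕜}
    {w : 𝕜 → E} (h : w =O[𝓝[s] 0] fun z => z ^ k) (hw : w =O[𝓟 s] fun _ => (1 : 𝕜)) :
    w =O[𝓟 s] fun z => z ^ k := by
  obtain ⟨c, hc⟩ := h.bound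
  obtain ⟨ε, hε, hnear⟩ := Metric.eventually_nhds_iff.1 (eventually_nhdsWithin_iff.1 hc)
  obtain ⟨M, hM⟩ := isBigO_principal.1 hw
  refine isBigO_principal.2 ⟨max c (M / ε ^ k), fun z hz => ?_⟩
  rw [norm_pow]
  rcases lt_or_ge ‖z‖ ε with hz_near | hz_far
  · calc ‖w z‖ ≤ c * ‖z‖ ^ k := by simpa [norm_pow] using hnear (by simpa using hz_near) hz
      _ ≤ max c (M / ε ^ k) * ‖z‖ ^ k := by gcongr; exact le_max_left _ _
  · have hwM : ‖w z‖ ≤ M := by simpa using hM z hz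
    have hM₀ : 0 ≤ M := (norm_nonneg _).trans hwM
    calc ‖w z‖ ≤ M / ε ^ k * ε ^ k := by rwa [div_mul_cancel₀ _ (by positivity)]
      _ ≤ M / ε ^ k * ‖z‖ ^ k := by gcongr
      _ ≤ max c (M / ε ^ k) * ‖z‖ ^ k := by gcongr; exact le_max_right _ _

namespace HasAsymptoticExpansionUpTo

theorem isBigO_one (hl : l ≤ 𝓝 0) (hu : HasAsymptoticExpansionUpTo u p l k) :
    u =O[l] fun _ => (1 : 𝕜) := by
  have hpow : (fun z : 𝕜 => z ^ k) =O[l] fun _ => (1 : 𝕜) :=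
    (((continuous_pow k).tendsto 0).isBigO_one 𝕜).mono hl
  have htrunc : (fun z => (trunc k p).eval z) =O[l] fun _ => (1 : 𝕜) :=
    (((trunc k p).continuous.tendsto 0).isBigO_one 𝕜).mono hl
  exact ((IsBigO.trans hu hpow).add htrunc).congr_left fun z => sub_add_cancel _ _

theorem mul (hl : l ≤ 𝓝 0) (hu : HasAsymptoticExpansionUpTo u p l k)
    (hv : HasAsymptoticExpansionUpTo v q l k) :
    HasAsymptoticExpansionUpTo (fun z => u z * v z) (p * q) l k := by
  have hprod := Polynomial.hasAsymptoticExpansionUpTo_eval (trunc k p * trunc k q) hl k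
  rw [HasAsymptoticExpansionUpTo, Polynomial.coe_mul, trunc_trunc_mul_trunc] at hprod
  have htrunc : (fun z => (trunc k p).eval z) =O[l] fun _ => (1 : 𝕜) :=
    (((trunc k p).continuous.tendsto 0).isBigO_one 𝕜).mono hl
  have hleft : (fun z => (u z - (trunc k p).eval z) * v z) =O[l] fun z => z ^ k := by
    simpa using IsBigO.mul hu (hv.isBigO_one hl)
  have hright : (fun z => (trunc k p).eval z * (v z - (trunc k q).eval z)) =O[l]
      fun z => z ^ k := by
    simpa using htrunc.mul hv
  refine ((hleft.add hright).add hprod).congr_left fun z => ?_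
  simp only [Polynomial.eval_mul]
  ring

theorem pow (hl : l ≤ 𝓝 0) (hu : HasAsymptoticExpansionUpTo u p l k) :
    ∀ j : ℕ, HasAsymptoticExpansionUpTo (fun z => u z ^ j) (p ^ j) l k
  | 0 => by simpa using Polynomial.hasAsymptoticExpansionUpTo_eval (1 : 𝕜[X]) hl k
  | j + 1 => by simpa only [pow_succ] using (hu.pow hl j).mul hl hu

theorem const_mul (hu : HasAsymptoticExpansionUpTo u p l k) (c : 𝕜) :
    HasAsymptoticExpansionUpTo (fun z => c * u z) (C c * p) l k := by
  rw [HasAsymptoticExpansionUpTo, trunc_C_mul]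
  simpa [mul_sub] using hu.const_mul_left c

theorem sum {ι : Type*} {s : Finset ι} {u : ι → 𝕜 → 𝕜} {p : ι → 𝕜⟦X⟧}
    (h : ∀ i ∈ s, HasAsymptoticExpansionUpTo (u i) (p i) l k) :
    HasAsymptoticExpansionUpTo (fun z => ∑ i ∈ s, u i z) (∑ i ∈ s, p i) l k := by
  rw [HasAsymptoticExpansionUpTo, map_sum]
  simpa [Polynomial.eval_finsetSum, Finset.sum_sub_distrib] using IsBigO.fun_sum h

theorem principal_of_nhdsWithin [ProperSpace 𝕜] {s : Set 𝕜}
    (h : HasAsymptoticExpansionUpTo u p (𝓝[s] 0) k) (hs : Bornology.IsBounded s)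
    (hu : u =O[𝓟 s] fun _ => (1 : 𝕜)) : HasAsymptoticExpansionUpTo u p (𝓟 s) k := by
  have htrunc : (fun z => (trunc k p).eval z) =O[𝓟 s] fun _ => (1 : 𝕜) :=
    ((trunc k p).continuous.continuousOn.isBigO_principal hs.isCompact_closure (by simp)).mono
      (principal_mono.2 subset_closure)
  exact isBigO_principal_pow_of_nhdsWithin h (hu.sub htrunc)

end HasAsymptoticExpansionUpTo

end AsymptoticExpansion

theorem HasAsymptoticExpansionUpTo.comp {l l' : Filter ℂ} {k : ℕ} {φ f : ℂ → ℂ} {P g : ℂ⟦X⟧}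
    (hl : l ≤ 𝓝 0) (hφ : HasAsymptoticExpansionUpTo φ P l' k)
    (hf : ∀ n, HasAsymptoticExpansionUpTo f g l n) (hg : constantCoeff g = 0)
    (hfl : Tendsto f l l') :
    HasAsymptoticExpansionUpTo (φ ∘ f) (pscomp P g) l k := by
  have hf_linear : f =O[l] fun z => z := by
    simpa [HasAsymptoticExpansionUpTo, trunc_one_left, hg] using hf 1
  have hpoly : HasAsymptoticExpansionUpTo (fun z => ∑ j ∈ Finset.range k, coeff j P * f z ^ j)
      (∑ j ∈ Finset.range k, C (coeff j P) * g ^ j) l k :=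
    .sum fun j _ => ((hf k).pow hl j).const_mul (coeff j P)
  have hφf := (hφ.comp_tendsto hfl).trans (hf_linear.pow k)
  rw [HasAsymptoticExpansionUpTo, trunc_pscomp hg]
  refine (hφf.add hpoly).congr_left fun z => ?_
  simp only [Function.comp_apply, eval_trunc_eq_sum_range]
  ring

theorem taylorAt_hasAsymptoticExpansionUpTo {f : ℂ → ℂ} (hf : AnalyticAt ℂ f 0) (k : ℕ) :
    HasAsymptoticExpansionUpTo f (taylorAt f) (𝓝 0) k := by
  have := hf.hasFPowerSeriesAt.isBigO_sub_partialSum_pow k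
  simp_rw [← norm_pow, isBigO_norm_right, zero_add] at this
  refine this.congr_left fun z => ?_
  simp [FormalMultilinearSeries.partialSum, eval_trunc_eq_sum_range, taylorAt, mul_comm]

theorem holonomy_transport_general (S₁ S₂ U : Set ℂ) (f φ : ℂ → ℂ) (a : ℕ → ℂ)
    (hU : IsOpen U) (h0U : (0 : ℂ) ∈ U)
    (hf : DifferentiableOn ℂ f U) (hf0 : f 0 = 0) (hf' : deriv f 0 ≠ 0)
    (hmaps : ∀ z ∈ S₂ ∩ U, f z ∈ S₁)
    (hasymp : ∀ k : ℕ, ∃ A : ℝ, 0 < A ∧ ∀ z ∈ S₁,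
      ‖φ z - ∑ j ∈ Finset.range k, a j * z ^ j‖ ≤ A * ‖z‖ ^ k)
    (hnonzero : PowerSeries.mk a ≠ 0) :
    pscomp (PowerSeries.mk a) (taylorAt f) ≠ 0 ∧
    ∃ r : ℝ, 0 < r ∧ ∀ k : ℕ, ∃ A : ℝ, 0 < A ∧
      ∀ z ∈ S₂, ‖z‖ < r →
        ‖φ (f z) - ∑ j ∈ Finset.range k,
            (PowerSeries.coeff j (pscomp (PowerSeries.mk a) (taylorAt f))) * z ^ j‖
          ≤ A * ‖z‖ ^ k := by
  have hg₀ : constantCoeff (taylorAt f) = 0 := by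
    simp [← coeff_zero_eq_constantCoeff_apply, taylorAt, hf0]
  have hg₁ : coeff 1 (taylorAt f) ≠ 0 := by simpa [taylorAt] using hf'
  refine ⟨pscomp_ne_zero hnonzero hg₀ hg₁, ?_⟩
  obtain ⟨r, hr, hrU⟩ := Metric.isOpen_iff.1 hU 0 h0U
  set s := S₂ ∩ Metric.ball 0 r
  have hfs : ∀ z ∈ s, f z ∈ S₁ := fun z hz => hmaps z ⟨hz.1, hrU hz.2⟩
  have htaylor (n : ℕ) : HasAsymptoticExpansionUpTo f (taylorAt f) (𝓝[s] 0) n :=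
    (taylorAt_hasAsymptoticExpansionUpTo (hf.analyticAt (hU.mem_nhds h0U)) n).mono
      nhdsWithin_le_nhds
  obtain ⟨A₀, -, hφ_bdd⟩ := hasymp 0
  refine ⟨r, hr, fun k => ?_⟩
  have hφ : HasAsymptoticExpansionUpTo φ (PowerSeries.mk a) (𝓟 S₁) k :=
    hasAsymptoticExpansionUpTo_principal_iff.2 (by simpa using hasymp k)
  have hcomp := hφ.comp nhdsWithin_le_nhds htaylor hg₀
    (tendsto_principal.2 (eventually_nhdsWithin_of_forall hfs))
  have hφf_bdd : (φ ∘ f) =O[𝓟 s] fun _ => (1 : ℂ) :=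
    isBigO_principal.2 ⟨A₀, fun z hz => by simpa using hφ_bdd (f z) (hfs z hz)⟩
  obtain ⟨A, hA, hbound⟩ := hasAsymptoticExpansionUpTo_principal_iff.1
    (hcomp.principal_of_nhdsWithin (Metric.isBounded_ball.subset Set.inter_subset_right) hφf_bdd)
  exact ⟨A, hA, fun z hz hzr => hbound z ⟨hz, mem_ball_zero_iff.2 hzr⟩⟩

/-- Transport by holonomy: composing a function with nonzero asymptotic
expansion `φ̂` on `S₁` with a biholomorphic germ `f` fixing `0` and mapping
`S₂ ∩ U` into `S₁` yields, near `0`, a function on `S₂` admitting the nonzero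
formal substitution `φ̂ ∘ f̂` as asymptotic expansion. -/
theorem holonomy_transport (S₁ S₂ U : Set ℂ) (f φ : ℂ → ℂ) (a : ℕ → ℂ)
    (hS₁ : IsSector S₁) (hS₂ : IsSector S₂)
    (hU : IsOpen U) (h0U : (0 : ℂ) ∈ U)
    (hf : DifferentiableOn ℂ f U) (hf0 : f 0 = 0) (hf' : deriv f 0 ≠ 0)
    (hmaps : ∀ z ∈ S₂ ∩ U, f z ∈ S₁)
    (hφ : DifferentiableOn ℂ φ S₁)
    (hasymp : ∀ k : ℕ, ∃ A : ℝ, 0 < A ∧ ∀ z ∈ S₁,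
      ‖φ z - ∑ j ∈ Finset.range k, a j * z ^ j‖ ≤ A * ‖z‖ ^ k)
    (hnonzero : PowerSeries.mk a ≠ 0) :
    pscomp (PowerSeries.mk a) (taylorAt f) ≠ 0 ∧
    ∃ r : ℝ, 0 < r ∧ ∀ k : ℕ, ∃ A : ℝ, 0 < A ∧
      ∀ z ∈ S₂, ‖z‖ < r →
        ‖φ (f z) - ∑ j ∈ Finset.range k,
            (PowerSeries.coeff j (pscomp (PowerSeries.mk a) (taylorAt f))) * z ^ j‖
          ≤ A * ‖z‖ ^ k :=
  holonomy_transport_general S₁ S₂ U f φ a hU h0U hf hf0 hf' hmaps hasymp hnonzero
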